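/- arXiv:2008.04475 — 2 statements merged into one kernel-verified Lean document; each statement's English description precedes it below -/
import Mathlib

section
/- Let (v_i)_{i≥1} be an exchangeable sequence of [0,1]-valued random variables with directing random measure ν (so conditionally on ν the v_i are i.i.d. from ν), and let w_j = v_j ∏_{i<j}(1-v_i). Then Σ_{j≥1} w_j = 1 almost surely if and only if ν({0}) < 1 almost surely. -/
open MeasureTheory Filter Finset Topology
open scoped ENNReal

/-!
The partial sums of the stick-breaking weights telescope:
`∑_{j<n} w_j = 1 - ∏_{i<n} (1 - v_i)`. On the event `ν{0} = 1` every `v_i` vanishes almost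
surely, so the weights sum to `0`. Conversely, if `ν{0} < 1` and `ν` lives on `[0,1]`, then
`ν (ε, ∞) > 0` for some `ε > 0`; given `ν`, the chance that `v_j ≤ ε` along a block of `n`
indices is `ν (-∞, ε]^n → 0`, so `v_j > ε` infinitely often. Hence `∑ v_j = ∞` and
`∏ (1 - v_i) ≤ exp (-∑ v_i) → 0`.
-/

/-- The sequence `v` is conditionally i.i.d. given the random measure `ν`
(i.e. `ν` is the directing random measure of the exchangeable sequence `v`):
for every finite collection of Borel sets and every measurable set of measures `C`,
the joint probability factorizes conditionally. -/
def CondIID {Ω : Type*} [MeasurableSpace Ω] (P : Measure Ω)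
    (ν : Ω → Measure ℝ) (v : ℕ → Ω → ℝ) : Prop :=
  ∀ (n : ℕ) (B : Fin n → Set ℝ), (∀ i, MeasurableSet (B i)) →
    ∀ C : Set (Measure ℝ), MeasurableSet C →
      P ((ν ⁻¹' C) ∩ ⋂ i, {ω | v (i : ℕ) ω ∈ B i}) =
        ∫⁻ ω in ν ⁻¹' C, ∏ i, ν ω (B i) ∂P

theorem sum_range_mul_prod_one_sub {R : Type*} [CommRing R] (v : ℕ → R) (n : ℕ) :
    ∑ j ∈ range n, v j * ∏ i ∈ range j, (1 - v i) = 1 - ∏ i ∈ range n, (1 - v i) := by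
  induction n with
  | zero => simp
  | succ n ih => rw [sum_range_succ, ih, prod_range_succ]; ring

theorem tendsto_prod_range_one_sub_of_not_summable {v : ℕ → ℝ} (h0 : ∀ i, 0 ≤ v i)
    (h1 : ∀ i, v i ≤ 1) (hv : ¬Summable v) :
    Tendsto (fun n => ∏ i ∈ range n, (1 - v i)) atTop (𝓝 0) := by
  have hsum : Tendsto (fun n => ∑ i ∈ range n, v i) atTop atTop :=
    (not_summable_iff_tendsto_nat_atTop_of_nonneg h0).1 hv
  refine tendsto_of_tendsto_of_tendsto_of_le_of_le tendsto_const_nhds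
    (Real.tendsto_exp_neg_atTop_nhds_zero.comp hsum)
    (fun n => prod_nonneg fun i _ => sub_nonneg.2 (h1 i)) fun n => ?_
  calc ∏ i ∈ range n, (1 - v i) ≤ ∏ i ∈ range n, Real.exp (-v i) :=
        prod_le_prod (fun i _ => sub_nonneg.2 (h1 i)) fun i _ => Real.one_sub_le_exp_neg _
    _ = Real.exp (-∑ i ∈ range n, v i) := by rw [← sum_neg_distrib, Real.exp_sum]

theorem tsum_mul_prod_one_sub_eq_one_of_not_summable {v : ℕ → ℝ} (h0 : ∀ i, 0 ≤ v i)
    (h1 : ∀ i, v i ≤ 1) (hv : ¬Summable v) :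
    ∑' j, v j * ∏ i ∈ range j, (1 - v i) = 1 := by
  have hw : ∀ j, 0 ≤ v j * ∏ i ∈ range j, (1 - v i) :=
    fun j => mul_nonneg (h0 j) (prod_nonneg fun i _ => sub_nonneg.2 (h1 i))
  refine ((hasSum_iff_tendsto_nat_of_nonneg hw 1).2 ?_).tsum_eq
  simp_rw [sum_range_mul_prod_one_sub]
  simpa using (tendsto_prod_range_one_sub_of_not_summable h0 h1 hv).const_sub 1

theorem not_summable_of_frequently_lt {f : ℕ → ℝ} {ε : ℝ} (hε : 0 < ε)
    (h : ∃ᶠ n in atTop, ε < f n) : ¬Summable f := fun hf =>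
  let ⟨_, hlt, hgt⟩ :=
    (h.and_eventually (hf.tendsto_atTop_zero.eventually (gt_mem_nhds hε))).exists
  hlt.not_gt hgt

theorem exists_measure_Ioi_one_div_ne_zero (μ : Measure ℝ) [IsProbabilityMeasure μ]
    (hneg : μ (Set.Iio 0) = 0) (h0 : μ {0} ≠ 1) :
    ∃ k : ℕ, μ (Set.Ioi (1 / (k + 1 : ℝ))) ≠ 0 := by
  by_contra! h
  have hcover : Set.Ioi (0 : ℝ) ⊆ ⋃ k : ℕ, Set.Ioi (1 / (k + 1 : ℝ)) :=
    fun x hx => Set.mem_iUnion.2 (exists_nat_one_div_lt (Set.mem_Ioi.1 hx))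
  have hpos : μ (Set.Ioi 0) = 0 := measure_mono_null hcover (measure_iUnion_null h)
  refine h0 ((prob_compl_eq_zero_iff (measurableSet_singleton 0)).1 ?_)
  rw [← Set.Iio_union_Ioi]
  exact measure_union_null hneg hpos

namespace CondIID

variable {Ω : Type*} [MeasurableSpace Ω] {P : Measure Ω} {ν : Ω → Measure ℝ}
  {v : ℕ → Ω → ℝ}

theorem measure_preimage_inter_forall_mem (hcond : CondIID P ν v)
    (hprob : ∀ ω, IsProbabilityMeasure (ν ω)) {B : Set ℝ} (hB : MeasurableSet B)
    {C : Set (Measure ℝ)} (hC : MeasurableSet C) (s : Finset ℕ) :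
    P (ν ⁻¹' C ∩ {ω | ∀ i ∈ s, v i ω ∈ B}) = ∫⁻ ω in ν ⁻¹' C, ν ω B ^ #s ∂P := by
  classical
  set n := (s.sup id).succ
  have hsn : s ⊆ range n := subset_range_sup_succ s
  have h := hcond n (fun i => if (i : ℕ) ∈ s then B else Set.univ)
    (fun i => by split_ifs <;> simp [hB]) C hC
  convert h using 3 with ω
  · ext ω
    simp only [Set.mem_ofPred_eq, Set.mem_iInter]
    refine ⟨fun hω i => ?_, fun hω i hi => ?_⟩
    · split_ifs with hi
      exacts [hω i hi, Set.mem_univ _]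
    · simpa [hi] using hω ⟨i, mem_range.1 (hsn hi)⟩
  · rw [Fin.prod_univ_eq_prod_range (fun i => ν ω (if i ∈ s then B else Set.univ)) n]
    simp_rw [apply_ite (ν ω), measure_univ]
    rw [prod_ite_mem, inter_eq_right.2 hsn, prod_const]

theorem ae_forall_mem_of_measure_eq_one (hcond : CondIID P ν v)
    (hprob : ∀ ω, IsProbabilityMeasure (ν ω)) (hν : Measurable ν) {B : Set ℝ}
    (hB : MeasurableSet B) : ∀ᵐ ω ∂P, ν ω B = 1 → ∀ i, v i ω ∈ B := by
  have hC : MeasurableSet {μ : Measure ℝ | μ B = 1} :=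
    Measure.measurable_coe hB (measurableSet_singleton 1)
  suffices h : ∀ i, ∀ᵐ ω ∂P, ν ω B = 1 → v i ω ∈ B from
    (ae_all_iff.2 h).mono fun ω h hω i => h i hω
  intro i
  rw [ae_iff]
  calc P {ω | ¬(ν ω B = 1 → v i ω ∈ B)}
      = P (ν ⁻¹' {μ | μ B = 1} ∩ {ω | ∀ j ∈ ({i} : Finset ℕ), v j ω ∈ Bᶜ}) := by
        congr 1; ext; simp
    _ = ∫⁻ ω in ν ⁻¹' {μ | μ B = 1}, ν ω Bᶜ ^ #{i} ∂P :=
      hcond.measure_preimage_inter_forall_mem hprob hB.compl hC {i}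
    _ = 0 := (setLIntegral_congr_fun (hν hC) fun ω hω => by
        rw [(prob_compl_eq_zero_iff hB).2 hω, card_singleton, pow_one]).trans
          lintegral_zero

theorem ae_frequently_mem_of_measure_ne_zero [IsFiniteMeasure P] (hcond : CondIID P ν v)
    (hprob : ∀ ω, IsProbabilityMeasure (ν ω)) (hν : Measurable ν) {B : Set ℝ}
    (hB : MeasurableSet B) : ∀ᵐ ω ∂P, ν ω B ≠ 0 → ∃ᶠ j in atTop, v j ω ∈ B := by
  set C : Set (Measure ℝ) := {μ | μ B ≠ 0}
  have hC : MeasurableSet C := Measure.measurable_coe hB (measurableSet_singleton 0).compl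
  have hlim : Tendsto (fun n : ℕ => ∫⁻ ω in ν ⁻¹' C, ν ω Bᶜ ^ n ∂P) atTop (𝓝 0) := by
    have hlt : ∀ ω ∈ ν ⁻¹' C, ν ω Bᶜ < 1 := fun ω hω => by
      rw [prob_compl_eq_one_sub hB]
      exact ENNReal.sub_lt_self ENNReal.one_ne_top one_ne_zero hω
    simpa using tendsto_lintegral_of_dominated_convergence (f := 0) 1
      (fun n => ((Measure.measurable_coe hB.compl).comp hν).pow_const n)
      (fun n => ae_of_all _ fun ω => pow_le_one₀ zero_le prob_le_one)
      (by simp)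
      ((ae_restrict_iff' (hν hC)).2 (ae_of_all _ fun ω hω =>
        ENNReal.tendsto_pow_atTop_nhds_zero_of_lt_one (hlt ω hω)))
  suffices h : ∀ m, ∀ᵐ ω ∂P, ν ω B ≠ 0 → ∃ j, m ≤ j ∧ v j ω ∈ B from
    (ae_all_iff.2 h).mono fun ω h hω => frequently_atTop.2 fun m => h m hω
  intro m
  rw [ae_iff]
  refine nonpos_iff_eq_zero.1 (ge_of_tendsto' hlim fun n => ?_)
  calc P {ω | ¬(ν ω B ≠ 0 → ∃ j, m ≤ j ∧ v j ω ∈ B)}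
      ≤ P (ν ⁻¹' C ∩ {ω | ∀ j ∈ Ico m (m + n), v j ω ∈ Bᶜ}) := by
        refine measure_mono fun ω hω => ?_
        simp only [Set.mem_ofPred_eq, Classical.not_imp, not_exists, not_and] at hω
        exact ⟨hω.1, fun j hj => hω.2 j (mem_Ico.1 hj).1⟩
    _ = ∫⁻ ω in ν ⁻¹' C, ν ω Bᶜ ^ n ∂P := by
        rw [hcond.measure_preimage_inter_forall_mem hprob hB.compl hC, Nat.card_Ico,
          Nat.add_sub_cancel_left]

end CondIID

theorem stmt_2_general {Ω : Type*} [MeasurableSpace Ω] (P : Measure Ω) [IsProbabilityMeasure P]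
    (ν : Ω → Measure ℝ) (hν_meas : Measurable ν)
    (hν_prob : ∀ ω, IsProbabilityMeasure (ν ω))
    (hν_supp : ∀ ω, ν ω (Set.Icc (0 : ℝ) 1)ᶜ = 0)
    (v : ℕ → Ω → ℝ)
    (hv01 : ∀ i ω, v i ω ∈ Set.Icc (0 : ℝ) 1)
    (hcond : CondIID P ν v) :
    (∀ᵐ ω ∂P, (∑' j, v j ω * ∏ i ∈ Finset.range j, (1 - v i ω)) = 1) ↔
      (∀ᵐ ω ∂P, ν ω {0} < 1) := by
  constructor
  · intro hsum
    filter_upwards [hsum, hcond.ae_forall_mem_of_measure_eq_one hν_prob hν_meas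
      (measurableSet_singleton 0)] with ω hω hzero
    refine (prob_le_one (μ := ν ω)).lt_of_ne fun h => ?_
    simp [show ∀ i, v i ω = 0 from hzero h] at hω
  · intro h0
    have hfreq := ae_all_iff.2 fun k : ℕ =>
      hcond.ae_frequently_mem_of_measure_ne_zero hν_prob hν_meas
        (measurableSet_Ioi (a := 1 / (k + 1 : ℝ)))
    filter_upwards [h0, hfreq] with ω hω hfreq
    have hneg : ν ω (Set.Iio 0) = 0 :=
      measure_mono_null (fun x hx => fun hx' => (not_le.2 hx) hx'.1) (hν_supp ω)
    obtain ⟨k, hk⟩ := exists_measure_Ioi_one_div_ne_zero (ν ω) hneg hω.ne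
    exact tsum_mul_prod_one_sub_eq_one_of_not_summable (fun i => (hv01 i ω).1)
      (fun i => (hv01 i ω).2)
      (not_summable_of_frequently_lt Nat.one_div_pos_of_nat (hfreq k hk))

/-- the stick-breaking weights built from exchangeable `[0,1]`-valued
length variables directed by `ν` sum to one a.s. iff `ν({0}) < 1` a.s. -/
theorem stmt_2 {Ω : Type*} [MeasurableSpace Ω] (P : Measure Ω) [IsProbabilityMeasure P]
    (ν : Ω → Measure ℝ) (hν_meas : Measurable ν)
    (hν_prob : ∀ ω, IsProbabilityMeasure (ν ω))
    (hν_supp : ∀ ω, ν ω (Set.Icc (0 : ℝ) 1)ᶜ = 0)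
    (v : ℕ → Ω → ℝ) (hv_meas : ∀ i, Measurable (v i))
    (hv01 : ∀ i ω, v i ω ∈ Set.Icc (0 : ℝ) 1)
    (hcond : CondIID P ν v) :
    (∀ᵐ ω ∂P, (∑' j, v j ω * ∏ i ∈ Finset.range j, (1 - v i ω)) = 1) ↔
      (∀ᵐ ω ∂P, ν ω {0} < 1) :=
  stmt_2_general P ν hν_meas hν_prob hν_supp v hv01 hcond
end

section
/- For the exponential integral E₁(β) = ∫_β^∞ x⁻¹ e^{-x} dx and ρ(β) = (1 + β² e^β E₁(β) - β)/2, using the bounds (e^{-β}/2) log(1 + 2/β) < E₁(β) < e^{-β} log(1 + 1/β) for β > 0, it holds that ρ(β) → 0 as β → ∞ and limsup_{β→0} ρ(β) ≤ 1/2. -/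
/-!
Integrating by parts twice gives `E₁(β) = e^{-β}(1/β - 1/β²) + 2∫_β^∞ e^{-x}/x³ dx`, which turns the
definition of `ρ` into `ρ(β) = β² e^β ∫_β^∞ e^{-x}/x³ dx`. Bounding `1/x³` by `1/β³` on the
range of integration gives `0 ≤ ρ(β) ≤ 1/β`, hence `ρ(β) → 0`. Near `0` the cruder estimate
`E₁(β) ≤ e^{-β}/β` already gives `ρ(β) ≤ 1/2`.
-/

open Filter

/-- The exponential integral `E₁(β) = ∫_β^∞ x⁻¹ e^{-x} dx`. -/
noncomputable def expInt (β : ℝ) : ℝ := ∫ x in Set.Ioi β, Real.exp (-x) / x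

/-- The tie probability of a normalized inverse-Gaussian random measure with total mass
parameter `β`: `ρ(β) = (1 + β² e^β E₁(β) - β)/2`. -/
noncomputable def ρNIG (β : ℝ) : ℝ := (1 + β ^ 2 * Real.exp β * expInt β - β) / 2

open MeasureTheory Set

section ExpNegDivPow

variable {β : ℝ}

lemma integrableOn_exp_neg_div_pow_Ioi (hβ : 0 < β) (n : ℕ) :
    IntegrableOn (fun x => Real.exp (-x) / x ^ n) (Ioi β) := by
  have hmaj : IntegrableOn (fun x => (β ^ n)⁻¹ * Real.exp (-1 * x)) (Ioi β) :=
    (exp_neg_integrableOn_Ioi β one_pos).const_mul _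
  refine hmaj.mono' ?_ ?_
  · exact (ContinuousOn.div (by fun_prop) (continuous_pow n).continuousOn
      fun x hx => pow_ne_zero n (hβ.trans hx).ne').aestronglyMeasurable measurableSet_Ioi
  · filter_upwards [ae_restrict_mem measurableSet_Ioi] with x (hx : β < x)
    rw [Real.norm_of_nonneg (by positivity [hβ.trans hx]), inv_mul_eq_div, neg_one_mul]
    exact div_le_div_of_nonneg_left (Real.exp_nonneg _) (pow_pos hβ n)
      (pow_le_pow_left₀ hβ.le hx.le n)

lemma setIntegral_exp_neg_div_pow_Ioi_nonneg (hβ : 0 < β) (n : ℕ) :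
    0 ≤ ∫ x in Ioi β, Real.exp (-x) / x ^ n :=
  setIntegral_nonneg measurableSet_Ioi fun x (hx : β < x) => by positivity [hβ.trans hx]

lemma setIntegral_exp_neg_div_pow_Ioi_le (hβ : 0 < β) (n : ℕ) :
    ∫ x in Ioi β, Real.exp (-x) / x ^ n ≤ Real.exp (-β) / β ^ n := calc
  ∫ x in Ioi β, Real.exp (-x) / x ^ n ≤ ∫ x in Ioi β, Real.exp (-x) / β ^ n := by
    have hexp : IntegrableOn (fun x : ℝ => Real.exp (-x)) (Ioi β) := by
      simpa using exp_neg_integrableOn_Ioi β one_pos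
    refine setIntegral_mono_on (integrableOn_exp_neg_div_pow_Ioi hβ n) (hexp.div_const _)
      measurableSet_Ioi fun x (hx : β < x) => ?_
    gcongr
  _ = Real.exp (-β) / β ^ n := by rw [integral_div, integral_exp_neg_Ioi]

end ExpNegDivPow

lemma expInt_le {β : ℝ} (hβ : 0 < β) : expInt β ≤ Real.exp (-β) / β := by
  simpa [expInt] using setIntegral_exp_neg_div_pow_Ioi_le hβ 1

/-- `-e^{-x}(1/x - 1/x²)` is an antiderivative of `e^{-x}/x - 2e^{-x}/x³`. -/
lemma expInt_eq {β : ℝ} (hβ : 0 < β) :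
    expInt β = Real.exp (-β) * (β⁻¹ - (β ^ 2)⁻¹)
      + 2 * ∫ x in Ioi β, Real.exp (-x) / x ^ 3 := by
  have hderiv : ∀ x ∈ Ici β, HasDerivAt (fun x : ℝ => -(Real.exp (-x) * (x⁻¹ - (x ^ 2)⁻¹)))
      (Real.exp (-x) / x - 2 * (Real.exp (-x) / x ^ 3)) x := by
    intro x (hx : β ≤ x)
    have hx0 : x ≠ 0 := (hβ.trans_le hx).ne'
    have hexp : HasDerivAt (fun x : ℝ => Real.exp (-x)) (-Real.exp (-x)) x := by
      simpa using (hasDerivAt_neg x).exp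
    refine ((hexp.mul ((hasDerivAt_inv hx0).sub
      ((hasDerivAt_pow 2 x).inv (pow_ne_zero 2 hx0)))).neg).congr_deriv ?_
    simp only [Pi.sub_apply, Pi.inv_apply]
    field_simp
    ring
  have hlim : Tendsto (fun x : ℝ => -(Real.exp (-x) * (x⁻¹ - (x ^ 2)⁻¹))) atTop (nhds 0) := by
    have hinv : Tendsto (fun x : ℝ => x⁻¹ - (x ^ 2)⁻¹) atTop (nhds (0 - 0)) :=
      tendsto_inv_atTop_zero.sub
        (tendsto_inv_atTop_zero.comp (tendsto_pow_atTop two_ne_zero))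
    simpa using (Real.tendsto_exp_neg_atTop_nhds_zero.mul hinv).neg
  have hint1 : IntegrableOn (fun x => Real.exp (-x) / x) (Ioi β) := by
    simpa using integrableOn_exp_neg_div_pow_Ioi hβ 1
  have hint3 := (integrableOn_exp_neg_div_pow_Ioi hβ 3).const_mul 2
  have hparts := integral_Ioi_of_hasDerivAt_of_tendsto' hderiv (hint1.sub hint3) hlim
  rw [integral_sub hint1 hint3, integral_const_mul] at hparts
  rw [expInt]
  linarith

lemma ρNIG_eq {β : ℝ} (hβ : 0 < β) :
    ρNIG β = β ^ 2 * Real.exp β * ∫ x in Ioi β, Real.exp (-x) / x ^ 3 := by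
  rw [ρNIG, expInt_eq hβ, Real.exp_neg]
  field_simp
  ring

lemma ρNIG_nonneg {β : ℝ} (hβ : 0 < β) : 0 ≤ ρNIG β := by
  rw [ρNIG_eq hβ]
  have := setIntegral_exp_neg_div_pow_Ioi_nonneg hβ 3
  positivity

lemma ρNIG_le_inv {β : ℝ} (hβ : 0 < β) : ρNIG β ≤ β⁻¹ := calc
  ρNIG β ≤ β ^ 2 * Real.exp β * (Real.exp (-β) / β ^ 3) := by
    rw [ρNIG_eq hβ]
    gcongr
    exact setIntegral_exp_neg_div_pow_Ioi_le hβ 3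
  _ = β⁻¹ := by
    rw [Real.exp_neg]
    field_simp

lemma ρNIG_le_half {β : ℝ} (hβ : 0 < β) : ρNIG β ≤ 1 / 2 := by
  have h : β ^ 2 * Real.exp β * expInt β ≤ β ^ 2 * Real.exp β * (Real.exp (-β) / β) := by
    gcongr
    exact expInt_le hβ
  have hβ' : β ^ 2 * Real.exp β * (Real.exp (-β) / β) = β := by
    rw [Real.exp_neg]
    field_simp
  rw [ρNIG]
  linarith

theorem stmt_19_general :
    Tendsto ρNIG atTop (nhds 0) ∧
      limsup ρNIG (nhdsWithin 0 (Set.Ioi 0)) ≤ 1 / 2 := by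
  have hpos : ∀ᶠ β in nhdsWithin (0 : ℝ) (Ioi 0), 0 < β := self_mem_nhdsWithin
  refine ⟨tendsto_of_tendsto_of_tendsto_of_le_of_le' tendsto_const_nhds tendsto_inv_atTop_zero
    ((eventually_gt_atTop 0).mono fun _ => ρNIG_nonneg)
    ((eventually_gt_atTop 0).mono fun _ => ρNIG_le_inv), ?_⟩
  exact limsup_le_of_le (isCoboundedUnder_le_of_eventually_le _ (hpos.mono fun _ => ρNIG_nonneg))
    (hpos.mono fun _ => ρNIG_le_half)

/-- using the bounds
`(e^{-β}/2) log(1 + 2/β) < E₁(β) < e^{-β} log(1 + 1/β)` for `β > 0`, the tie probability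
satisfies `ρ(β) → 0` as `β → ∞`, and `limsup_{β→0⁺} ρ(β) ≤ 1/2`. -/
theorem stmt_19
    (hlow : ∀ β : ℝ, 0 < β → Real.exp (-β) / 2 * Real.log (1 + 2 / β) < expInt β)
    (hupp : ∀ β : ℝ, 0 < β → expInt β < Real.exp (-β) * Real.log (1 + 1 / β)) :
    Tendsto ρNIG atTop (nhds 0) ∧
      limsup ρNIG (nhdsWithin 0 (Set.Ioi 0)) ≤ 1 / 2 :=
  stmt_19_general
end
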